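/- arXiv:2007.01832 — 5 statements merged into one kernel-verified Lean document; each statement's English description precedes it below -/
import Mathlib

section
/- Let b, β ∈ ℝ^N have strictly positive entries, β̄ = Σᵢ βᵢ, γ = (β - b)/β̄, and B = I_N - γ 1ᵀ. Then -B is diagonally stable: there exists a diagonal matrix D with strictly positive diagonal entries such that BᵀD + DB is positive definite. -/
open Matrix

theorem stmt_3 (N : ℕ) (hN : 1 ≤ N) (b β : Fin N → ℝ)
    (hb : ∀ i, 0 < b i) (hβ : ∀ i, 0 < β i)
    (γ : Fin N → ℝ) (hγ : γ = fun i => (β i - b i) / (∑ j, β j))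
    (B : Matrix (Fin N) (Fin N) ℝ)
    (hB : B = 1 - Matrix.vecMulVec γ (fun _ => (1:ℝ))) :
    ∃ d : Fin N → ℝ, (∀ i, 0 < d i) ∧
      (Bᵀ * Matrix.diagonal d + Matrix.diagonal d * B).PosDef := by
  have hne : (Finset.univ : Finset (Fin N)).Nonempty := by
    refine Finset.univ_nonempty_iff.mpr ?_
    exact Fin.pos_iff_nonempty.mp (by omega)
  have hS : 0 < ∑ j, β j := Finset.sum_pos (fun i _ => hβ i) hne
  set S : ℝ := ∑ j, β j with hSdef
  -- the diagonal weights
  set A : Fin N → ℝ := fun i => |β i - b i| + min (β i) (b i) with hA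
  have hApos : ∀ i, 0 < A i := fun i =>
    add_pos_of_nonneg_of_pos (abs_nonneg _) (lt_min (hβ i) (hb i))
  set d : Fin N → ℝ := fun i => S / A i with hd
  have hdpos : ∀ i, 0 < d i := fun i => div_pos hS (hApos i)
  refine ⟨d, hdpos, ?_⟩
  -- the quadratic form identity
  have hds : ∀ (f g : Fin N → ℝ), (∑ i, ∑ j, f j * g i) = (∑ j, f j) * (∑ i, g i) := by
    intro f g
    simp_rw [← Finset.sum_mul, ← Finset.mul_sum]
  have hquad : ∀ x : Fin N → ℝ,
      x ⬝ᵥ ((Bᵀ * Matrix.diagonal d + Matrix.diagonal d * B) *ᵥ x)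
        = 2*(∑ i, d i * x i^2) - 2*(∑ i, x i)*(∑ i, d i * γ i * x i) := by
    intro x
    subst hB
    simp only [Matrix.mulVec, dotProduct, Matrix.mul_apply, Matrix.add_apply,
      Matrix.sub_apply, Matrix.vecMulVec_apply, Matrix.one_apply, Matrix.diagonal,
      Matrix.transpose_apply, Matrix.of_apply, sub_mul, mul_sub, mul_one, mul_ite, ite_mul,
      mul_zero, zero_mul, Finset.sum_sub_distrib, Finset.sum_add_distrib,
      Finset.sum_ite_eq, Finset.sum_ite_eq', Finset.mem_univ, if_true,
      Finset.mul_sum, Finset.sum_mul, mul_sub, mul_add, one_mul, add_mul, sub_mul]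
    rw [Finset.sum_comm (f := fun x_1 i => x x_1 * (d x_1 * γ x_1 * x i))]
    simp only [← Finset.sum_mul, ← Finset.mul_sum]
    rw [show (∑ y : Fin N, ∑ j : Fin N, x j * (d j * γ j * x y))
        = (∑ i, d i * γ i * x i) * (∑ i, x i) from by
      rw [← hds (fun j => d j * γ j * x j) x]
      exact Finset.sum_congr rfl fun y _ => Finset.sum_congr rfl fun j _ => by ring]
    rw [show (∑ i, x i * (d i * x i)) = ∑ i, d i * x i ^ 2 from
        Finset.sum_congr rfl fun i _ => by ring,
      show (∑ i, γ i * d i * x i) = ∑ i, d i * γ i * x i from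
        Finset.sum_congr rfl fun i _ => by ring]
    ring
  -- key numeric bound: ∑ d i * (1/d i + γ i)^2 < 4
  have hkey : (∑ i, d i * (1 / d i + γ i)^2) < 4 := by
    have hterm : ∀ i, d i * (1 / d i + γ i)^2 < 4 * β i / S := by
      intro i
      have hAi := hApos i
      have hdi := hdpos i
      have hγi : γ i = (β i - b i) / S := by rw [hγ]
      have hd2 : d i = S / A i := rfl
      have h1 : d i * (1 / d i + γ i)^2 = 1 / d i + 2 * γ i + d i * γ i ^ 2 := by
        field_simp
        ring
      have hcore : A i * A i + 2 * (β i - b i) * A i + (β i - b i)^2 < 4 * β i * A i := by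
        have hAval : A i = |β i - b i| + min (β i) (b i) := rfl
        rcases le_total (b i) (β i) with hc | hc
        · rw [hAval, abs_of_nonneg (by linarith : (0:ℝ) ≤ β i - b i), min_eq_right hc]
          nlinarith [hb i, hβ i]
        · rw [hAval, abs_of_nonpos (by linarith : β i - b i ≤ (0:ℝ)), min_eq_left hc]
          nlinarith [hb i, hβ i]
      rw [h1, hγi, hd2]
      have e1 : 1 / (S / A i) + 2 * ((β i - b i) / S) + (S / A i) * ((β i - b i) / S)^2
          = (A i * A i + 2 * (β i - b i) * A i + (β i - b i)^2) / (A i * S) := by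
        field_simp
      have e2 : 4 * β i / S = (4 * β i * A i) / (A i * S) := by
        field_simp
      rw [e1, e2]
      exact (div_lt_div_iff_of_pos_right (mul_pos hAi hS)).mpr hcore
    calc (∑ i, d i * (1 / d i + γ i)^2) < ∑ i, 4 * β i / S :=
          Finset.sum_lt_sum_of_nonempty hne (fun i _ => hterm i)
      _ = 4 := by
          rw [← Finset.sum_div]
          rw [show (∑ i, 4 * β i) = 4 * S from by rw [hSdef, Finset.mul_sum]]
          field_simp
  clear hd hA
  clear_value d A
  -- positive definiteness
  refine Matrix.posDef_iff_dotProduct_mulVec.mpr ⟨?_, ?_⟩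
  · -- Hermitian
    unfold Matrix.IsHermitian
    rw [Matrix.conjTranspose_eq_transpose_of_trivial, Matrix.transpose_add,
      Matrix.transpose_mul, Matrix.transpose_mul, Matrix.transpose_transpose,
      Matrix.diagonal_transpose, add_comm]
  · intro x hx
    have hstar : star x = x := rfl
    rw [hstar, hquad x]
    -- let s, t, P
    set s : ℝ := ∑ i, x i with hs
    set t : ℝ := ∑ i, d i * γ i * x i with ht
    set P : ℝ := ∑ i, d i * x i ^ 2 with hP
    have hPpos : 0 < P := by
      obtain ⟨i0, hi0⟩ : ∃ i, x i ≠ 0 := by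
        by_contra h
        push_neg at h
        exact hx (funext h)
      refine Finset.sum_pos' (fun i _ => mul_nonneg (le_of_lt (hdpos i)) (sq_nonneg _)) ?_
      exact ⟨i0, Finset.mem_univ i0, mul_pos (hdpos i0) (by positivity)⟩
    have hst : s + t = ∑ i, (Real.sqrt (d i) * (1 / d i + γ i)) * (Real.sqrt (d i) * x i) := by
      rw [hs, ht, ← Finset.sum_add_distrib]
      refine Finset.sum_congr rfl fun i _ => ?_
      have hsq : Real.sqrt (d i) * Real.sqrt (d i) = d i :=
        Real.mul_self_sqrt (le_of_lt (hdpos i))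
      have hdi : d i ≠ 0 := (hdpos i).ne'
      have h11 : d i * (1 / d i) = 1 := mul_one_div_cancel hdi
      calc x i + d i * γ i * x i = (d i * (1 / d i)) * x i + d i * γ i * x i := by
            rw [h11]; ring
        _ = d i * ((1 / d i + γ i) * x i) := by ring
        _ = (Real.sqrt (d i) * (1 / d i + γ i)) * (Real.sqrt (d i) * x i) := by
            linear_combination (-((1 / d i + γ i) * x i)) * hsq
    have hcs : (s + t)^2 ≤ (∑ i, d i * (1 / d i + γ i)^2) * P := by
      rw [hst]
      calc (∑ i, (Real.sqrt (d i) * (1 / d i + γ i)) * (Real.sqrt (d i) * x i))^2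
          ≤ (∑ i, (Real.sqrt (d i) * (1 / d i + γ i))^2) * (∑ i, (Real.sqrt (d i) * x i)^2) :=
            Finset.sum_mul_sq_le_sq_mul_sq _ _ _
        _ = (∑ i, d i * (1 / d i + γ i)^2) * P := by
            rw [hP]
            congr 1 <;> refine Finset.sum_congr rfl fun i _ => ?_ <;>
              rw [mul_pow, Real.sq_sqrt (le_of_lt (hdpos i))]
    have h4 : (s + t)^2 < 4 * P :=
      lt_of_le_of_lt hcs (by
        have := mul_lt_mul_of_pos_right hkey hPpos
        linarith)
    nlinarith [sq_nonneg (s - t)]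
end

section
/- Under the steady-state equations of the previous context, with ACE_k := ΔNI_k + b_k Δf and b_k > 0, the following are equivalent: (i) u_k = ΔP^L_k for all k; (ii) Δf = 0 and ΔNI_k = 0 for all k; (iii) ACE_k = 0 for all k. -/
theorem stmt_7 (N : ℕ) (hN : 1 ≤ N)
    (D R b u PL NI : Fin N → ℝ) (Δf : ℝ)
    (hD : ∀ k, 0 < D k) (hR : ∀ k, 0 < R k) (hb : ∀ k, 0 < b k)
    (hss : ∀ k, u k - (1 / R k) * Δf = D k * Δf + PL k + NI k)
    (hbal : ∑ k, NI k = 0)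
    (ACE : Fin N → ℝ) (hACE : ∀ k, ACE k = NI k + b k * Δf) :
    ((∀ k, u k = PL k) ↔ (Δf = 0 ∧ ∀ k, NI k = 0)) ∧
    ((Δf = 0 ∧ ∀ k, NI k = 0) ↔ (∀ k, ACE k = 0)) := by
  constructor
  · constructor
    · intro h
      have hk : ∀ k, (D k + 1 / R k) * Δf + NI k = 0 := by
        intro k
        have := hss k
        rw [h k] at this
        linarith
      have hsum : (∑ k, (D k + 1 / R k)) * Δf = 0 := by
        have h0 : ∑ k, ((D k + 1 / R k) * Δf + NI k) = 0 := Finset.sum_eq_zero (fun k _ => hk k)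
        rw [Finset.sum_add_distrib, ← Finset.sum_mul, hbal, add_zero] at h0
        exact h0
      have hpos : 0 < ∑ k, (D k + 1 / R k) := by
        apply Finset.sum_pos
        · intro k _
          have := hD k; have := hR k
          positivity
        · exact Finset.univ_nonempty_iff.mpr (Fin.pos_iff_nonempty.mp hN)
      have hf : Δf = 0 := by
        rcases mul_eq_zero.mp hsum with h' | h'
        · exact absurd h' (ne_of_gt hpos)
        · exact h'
      refine ⟨hf, fun k => ?_⟩
      have := hk k
      rw [hf] at this
      linarith
    · rintro ⟨hf, hNI⟩ k
      have := hss k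
      rw [hf, hNI k] at this
      linarith
  · constructor
    · rintro ⟨hf, hNI⟩ k
      rw [hACE k, hf, hNI k]; ring
    · intro h
      have hk : ∀ k, NI k = -(b k * Δf) := by
        intro k
        have := h k
        rw [hACE k] at this
        linarith
      have hsum : (∑ k, b k) * Δf = 0 := by
        have h0 : ∑ k, (NI k + b k * Δf) = 0 := by
          exact Finset.sum_eq_zero (fun k _ => by rw [hk k]; ring)
        rw [Finset.sum_add_distrib, hbal, zero_add, ← Finset.sum_mul] at h0
        exact h0
      have hpos : 0 < ∑ k, b k :=
        Finset.sum_pos (fun k _ => hb k)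
          (Finset.univ_nonempty_iff.mpr (Fin.pos_iff_nonempty.mp hN))
      have hf : Δf = 0 := by
        rcases mul_eq_zero.mp hsum with h' | h'
        · exact absurd h' (ne_of_gt hpos)
        · exact h'
      refine ⟨hf, fun k => ?_⟩
      rw [hk k, hf]; ring
end

section
/- The matrix B_ACE defined entrywise by (B_ACE)_{kj} = δ_{kj} + (b_k - β_k)/β̄ (with β̄ = Σ_i β_i) equals I_N - γ1ᵀ with γ = (β - b)/β̄, and ACE = B_ACE (u - ΔP^L): that is, under the steady-state equations, the vector of area control errors is the linear image under B_ACE of the vector of area mismatches u - ΔP^L. -/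
open Matrix

theorem stmt_9 (N : ℕ) (hN : 1 ≤ N)
    (D R b u PL NI : Fin N → ℝ) (Δf : ℝ)
    (hD : ∀ k, 0 < D k) (hR : ∀ k, 0 < R k) (hb : ∀ k, 0 < b k)
    (β : Fin N → ℝ) (hβ : β = fun k => D k + 1 / R k)
    (βbar : ℝ) (hβbar : βbar = ∑ k, β k)
    (hss : ∀ k, u k - (1 / R k) * Δf = D k * Δf + PL k + NI k)
    (hbal : ∑ k, NI k = 0)
    (ACE : Fin N → ℝ) (hACE : ∀ k, ACE k = NI k + b k * Δf)
    (BACE : Matrix (Fin N) (Fin N) ℝ)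
    (hBACE : ∀ k j, BACE k j = (if k = j then (1:ℝ) else 0) + (b k - β k) / βbar)
    (γ : Fin N → ℝ) (hγ : γ = fun i => (β i - b i) / βbar) :
    BACE = 1 - Matrix.vecMulVec γ (fun _ => (1:ℝ)) ∧
    ∀ k, ACE k = ∑ j, BACE k j * (u j - PL j) := by
  have hβpos : ∀ k, 0 < β k := by
    intro k; rw [hβ]; have := hD k; have := hR k; positivity
  have hβbarpos : 0 < βbar := by
    rw [hβbar]
    exact Finset.sum_pos (fun i _ => hβpos i) (Finset.univ_nonempty_iff.2 ⟨⟨0, hN⟩⟩)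
  have hβbarne : βbar ≠ 0 := ne_of_gt hβbarpos
  constructor
  · ext k j
    simp [hBACE, Matrix.one_apply, Matrix.vecMulVec_apply, hγ, sub_div, Matrix.sub_apply]
    ring
  · intro k
    have hmis : ∀ j, u j - PL j = β j * Δf + NI j := by
      intro j
      have := hss j
      rw [hβ]
      nlinarith [hss j]
    have hsum : ∑ j, (u j - PL j) = βbar * Δf := by
      rw [hβbar]
      simp only [hmis]
      rw [Finset.sum_add_distrib, hbal, ← Finset.sum_mul]
      ring
    have : ∑ j, BACE k j * (u j - PL j)
        = ∑ j, ((if k = j then (1:ℝ) else 0) * (u j - PL j)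
            + (b k - β k) / βbar * (u j - PL j)) := by
      apply Finset.sum_congr rfl
      intro j _
      rw [hBACE]; ring
    rw [this, Finset.sum_add_distrib]
    simp only [ite_mul, one_mul, zero_mul, Finset.sum_ite_eq, Finset.mem_univ, if_true]
    rw [← Finset.mul_sum, hsum]
    simp [hACE, hmis k]
    field_simp
    ring
end

section
/- Consider the linear ODE η̇ = -(1/τ) B_ACE (η - d) on ℝ^N with τ > 0, d ∈ ℝ^N constant, and B_ACE = I_N - γ1ᵀ where γ = (β - b)/β̄, b, β entrywise positive, β̄ = Σβᵢ. Then η = d is the unique equilibrium and it is globally exponentially stable: every solution converges exponentially to d. -/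
open Matrix

/-- Homogeneous scalar linear ODE: u' = a·u  ⇒  u t = u 0 · e^{at}. -/
lemma exp_ode (a : ℝ) (u : ℝ → ℝ) (hu : ∀ t, HasDerivAt u (a * u t) t) (t : ℝ) :
    u t = u 0 * Real.exp (a * t) := by
  have hd : ∀ s, HasDerivAt (fun s => u s * Real.exp (-(a * s))) 0 s := by
    intro s
    have he : HasDerivAt (fun s : ℝ => Real.exp (-(a * s)))
        (Real.exp (-(a * s)) * -(a * 1)) s :=
      (((hasDerivAt_id s).const_mul a).neg).exp
    have := (hu s).mul he
    refine this.congr_deriv ?_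
    ring
  have hconst : ∀ s, u s * Real.exp (-(a * s)) = u 0 := by
    intro s
    have := is_const_of_deriv_eq_zero (f := fun s => u s * Real.exp (-(a * s)))
      (fun x => (hd x).differentiableAt) (fun x => (hd x).deriv) s 0
    simpa using this
  have h := hconst t
  rw [Real.exp_neg] at h
  field_simp at h
  linarith

/-- Uniqueness for forced scalar linear ODE. -/
lemma ode_unique (a : ℝ) (g u ψ : ℝ → ℝ) (h0 : u 0 = ψ 0)
    (hu : ∀ t, HasDerivAt u (a * u t + g t) t)
    (hψ : ∀ t, HasDerivAt ψ (a * ψ t + g t) t) (t : ℝ) : u t = ψ t := by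
  have hw : ∀ s, HasDerivAt (fun s => u s - ψ s) (a * (u s - ψ s)) s := by
    intro s
    have := (hu s).sub (hψ s)
    refine this.congr_deriv ?_
    ring
  have := exp_ode a _ hw t
  simp only [h0, sub_self, zero_mul] at this
  linarith

set_option maxHeartbeats 1000000 in
theorem stmt_10 (N : ℕ) (hN : 1 ≤ N) (b β : Fin N → ℝ)
    (hb : ∀ i, 0 < b i) (hβ : ∀ i, 0 < β i)
    (γ : Fin N → ℝ) (hγ : γ = fun i => (β i - b i) / (∑ j, β j))
    (B : Matrix (Fin N) (Fin N) ℝ)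
    (hB : B = 1 - Matrix.vecMulVec γ (fun _ => (1:ℝ)))
    (τ : ℝ) (hτ : 0 < τ) (d : Fin N → ℝ) :
    (∀ x : Fin N → ℝ, -(1 / τ) • B.mulVec (x - d) = 0 → x = d) ∧
    ∀ η : ℝ → (Fin N → ℝ),
      (∀ t, HasDerivAt η (-(1 / τ) • B.mulVec (η t - d)) t) →
      ∃ M c : ℝ, 0 < c ∧ ∀ t : ℝ, 0 ≤ t →
        ‖η t - d‖ ≤ M * Real.exp (-c * t) * ‖η 0 - d‖ := by
  haveI : Nonempty (Fin N) := ⟨⟨0, hN⟩⟩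
  have hbetasum : 0 < ∑ j, β j := Finset.sum_pos (fun i _ => hβ i) Finset.univ_nonempty
  have hbsum : 0 < ∑ j, b j := Finset.sum_pos (fun i _ => hb i) Finset.univ_nonempty
  -- the sum of γ
  set σ : ℝ := ∑ i, γ i with hσdef
  have hσ : σ = 1 - (∑ j, b j) / (∑ j, β j) := by
    rw [hσdef, hγ]
    rw [← Finset.sum_div, Finset.sum_sub_distrib]
    field_simp
  set lam : ℝ := 1 - σ with hlamdef
  have hlam : 0 < lam := by
    rw [hlamdef, hσ]
    have := div_pos hbsum hbetasum
    linarith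
  -- mulVec formula
  have hBmul : ∀ v : Fin N → ℝ, ∀ i, B.mulVec v i = v i - γ i * (∑ j, v j) := by
    intro v i
    rw [hB]
    simp [Matrix.sub_mulVec, Matrix.mulVec, Matrix.vecMulVec, dotProduct,
      Matrix.one_apply, ite_mul, sub_mul, Finset.sum_sub_distrib, Finset.mul_sum]
  constructor
  · -- uniqueness of equilibrium
    intro x hx
    have hτ' : -(1 / τ) ≠ 0 := by
      have : (1:ℝ) / τ > 0 := by positivity
      linarith
    have h0 : B.mulVec (x - d) = 0 := by
      rcases smul_eq_zero.mp hx with h | h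
      · exact absurd h hτ'
      · exact h
    set S : ℝ := ∑ j, (x j - d j) with hSdef
    have hxi : ∀ i, x i - d i = γ i * S := by
      intro i
      have := congrFun h0 i
      rw [hBmul] at this
      simp only [Pi.sub_apply, Pi.zero_apply] at this
      rw [hSdef]
      linarith [this]
    have hS0 : S = 0 := by
      have : S = σ * S := by
        rw [hSdef, hσdef]
        calc ∑ j, (x j - d j) = ∑ j, γ j * S := Finset.sum_congr rfl (fun j _ => hxi j)
        _ = (∑ j, γ j) * S := by rw [Finset.sum_mul]
      have h2 : lam * S = 0 := by rw [hlamdef]; linarith [this]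
      exact (mul_eq_zero.mp h2).resolve_left hlam.ne' |>.symm ▸ rfl
    funext i
    have := hxi i
    rw [hS0, mul_zero] at this
    linarith
  · -- exponential stability
    intro η hη
    set S0 : ℝ := ∑ j, (η 0 j - d j) with hS0def
    -- componentwise derivative
    have hyd : ∀ t i, HasDerivAt (fun s => η s i - d i)
        (-(1/τ) * ((η t i - d i) - γ i * (∑ j, (η t j - d j)))) t := by
      intro t i
      have h1 := (hasDerivAt_pi.mp (hη t)) i
      have h2 := h1.sub_const (d i)
      refine h2.congr_deriv ?_
      have h3 := hBmul (η t - d) i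
      simp only [Pi.smul_apply, smul_eq_mul, h3, Pi.sub_apply]
    -- the sum satisfies a homogeneous linear ODE
    have hS' : ∀ t, HasDerivAt (fun s => ∑ j, (η s j - d j))
        ((-(lam/τ)) * (∑ j, (η t j - d j))) t := by
      intro t
      have := HasDerivAt.fun_sum (fun i (_ : i ∈ Finset.univ) => hyd t i)
      refine this.congr_deriv ?_
      have key : ∀ K : ℝ, ∑ i, (-(1/τ) * ((η t i - d i) - γ i * K))
          = -(1/τ) * ((∑ j, (η t j - d j)) - (∑ i, γ i) * K) := by
        intro K
        rw [← Finset.mul_sum, Finset.sum_sub_distrib, Finset.sum_mul]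
      rw [key, ← hσdef]
      have hσlam : σ = 1 - lam := by rw [hlamdef]; ring
      rw [hσlam]
      field_simp
      ring
    have hSform : ∀ s, (∑ j, (η s j - d j)) = S0 * Real.exp ((-(lam/τ)) * s) := by
      intro s
      have := exp_ode (-(lam/τ)) (fun s => ∑ j, (η s j - d j)) hS' s
      simpa [hS0def] using this
    -- bounds on the data
    set G : ℝ := ∑ i, |γ i| with hGdef
    have hG0 : 0 ≤ G := Finset.sum_nonneg fun i _ => abs_nonneg _
    have hGi : ∀ i, |γ i| ≤ G := fun i =>
      Finset.single_le_sum (fun j (_ : j ∈ Finset.univ) => abs_nonneg (γ j)) (Finset.mem_univ i)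
    have hy0i : ∀ i, |η 0 i - d i| ≤ ‖η 0 - d‖ := by
      intro i
      have := norm_le_pi_norm (η 0 - d) i
      simpa [Real.norm_eq_abs] using this
    have hS0bound : |S0| ≤ N * ‖η 0 - d‖ := by
      calc |S0| ≤ ∑ j, |η 0 j - d j| := Finset.abs_sum_le_sum_abs _ _
        _ ≤ ∑ _j : Fin N, ‖η 0 - d‖ := Finset.sum_le_sum fun j _ => hy0i j
        _ = N * ‖η 0 - d‖ := by
            simp [Finset.sum_const, Finset.card_univ, nsmul_eq_mul]
    have hy0norm : 0 ≤ ‖η 0 - d‖ := norm_nonneg _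
    by_cases hcase : lam = 1
    · -- resonant case
      refine ⟨1 + 2 * G * N, 1/(2*τ), by positivity, ?_⟩
      intro t ht
      have hform : ∀ i, η t i - d i =
          ((η 0 i - d i) + (γ i * S0 / τ) * t) * Real.exp ((-(1/τ)) * t) := by
        intro i
        refine ode_unique (-(1/τ)) (fun s => (γ i * S0 / τ) * Real.exp ((-(lam/τ)) * s))
          (fun s => η s i - d i)
          (fun s => ((η 0 i - d i) + (γ i * S0 / τ) * s) * Real.exp ((-(1/τ)) * s)) ?_ ?_ ?_ t
        · simp
        · intro s
          convert hyd s i using 1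
          rw [hSform s]
          ring
        · intro s
          have hexp : HasDerivAt (fun s : ℝ => Real.exp ((-(1/τ)) * s))
              (Real.exp ((-(1/τ)) * s) * ((-(1/τ)) * 1)) s :=
            ((hasDerivAt_id s).const_mul (-(1/τ))).exp
          have hlin : HasDerivAt (fun s : ℝ => (η 0 i - d i) + (γ i * S0 / τ) * s)
              (0 + (γ i * S0 / τ) * 1) s :=
            (hasDerivAt_const s _).add ((hasDerivAt_id s).const_mul _)
          have := hlin.mul hexp
          refine this.congr_deriv ?_
          rw [hcase]
          ring
      -- bound
      have hEpos : 0 < Real.exp ((-(1/τ)) * t) := Real.exp_pos _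
      have hXge : (1:ℝ) ≤ Real.exp (t/(2*τ)) := by
        rw [← Real.exp_zero]
        exact Real.exp_le_exp.mpr (by positivity)
      have htle : t / τ ≤ 2 * Real.exp (t/(2*τ)) := by
        have h1 := Real.add_one_le_exp (t/(2*τ))
        have : t/(2*τ) ≤ Real.exp (t/(2*τ)) := by linarith
        calc t/τ = 2 * (t/(2*τ)) := by field_simp
          _ ≤ 2 * Real.exp (t/(2*τ)) := by linarith
      have hcomb : Real.exp (t/(2*τ)) * Real.exp ((-(1/τ)) * t)
          = Real.exp (-(1/(2*τ)) * t) := by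
        rw [← Real.exp_add]
        congr 1
        field_simp
        ring
      rw [pi_norm_le_iff_of_nonneg (by positivity)]
      intro i
      rw [Pi.sub_apply, Real.norm_eq_abs, hform i]
      have hki : |γ i * S0 / τ| ≤ G * N * ‖η 0 - d‖ / τ := by
        rw [abs_div, abs_mul, abs_of_pos hτ]
        apply (div_le_div_iff_of_pos_right hτ).mpr
        calc |γ i| * |S0| ≤ G * (N * ‖η 0 - d‖) :=
              mul_le_mul (hGi i) hS0bound (abs_nonneg _) hG0
          _ = G * N * ‖η 0 - d‖ := by ring
      have hkt : |γ i * S0 / τ| * t ≤ 2 * G * N * ‖η 0 - d‖ * Real.exp (t/(2*τ)) := by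
        calc |γ i * S0 / τ| * t ≤ (G * N * ‖η 0 - d‖ / τ) * t := by
              apply mul_le_mul_of_nonneg_right hki ht
          _ = (G * N * ‖η 0 - d‖) * (t / τ) := by ring
          _ ≤ (G * N * ‖η 0 - d‖) * (2 * Real.exp (t/(2*τ))) := by
              apply mul_le_mul_of_nonneg_left htle (by positivity)
          _ = 2 * G * N * ‖η 0 - d‖ * Real.exp (t/(2*τ)) := by ring
      calc |((η 0 i - d i) + (γ i * S0 / τ) * t) * Real.exp ((-(1/τ)) * t)|
          = |(η 0 i - d i) + (γ i * S0 / τ) * t| * Real.exp ((-(1/τ)) * t) := by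
            rw [abs_mul, abs_of_pos hEpos]
        _ ≤ (|η 0 i - d i| + |γ i * S0 / τ| * t) * Real.exp ((-(1/τ)) * t) := by
            apply mul_le_mul_of_nonneg_right _ hEpos.le
            calc |(η 0 i - d i) + (γ i * S0 / τ) * t|
                ≤ |η 0 i - d i| + |(γ i * S0 / τ) * t| := abs_add_le _ _
              _ = |η 0 i - d i| + |γ i * S0 / τ| * t := by
                  rw [abs_mul, abs_of_nonneg ht]
        _ ≤ ((1 + 2*G*N) * ‖η 0 - d‖ * Real.exp (t/(2*τ))) * Real.exp ((-(1/τ)) * t) := by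
            apply mul_le_mul_of_nonneg_right _ hEpos.le
            have h1 := hy0i i
            nlinarith [mul_nonneg (mul_nonneg hG0 (Nat.cast_nonneg N : (0:ℝ) ≤ N)) hy0norm,
              hXge, hkt]
        _ = (1 + 2*G*N) * (Real.exp (t/(2*τ)) * Real.exp ((-(1/τ)) * t)) * ‖η 0 - d‖ := by
            ring
        _ = (1 + 2*G*N) * Real.exp (-(1/(2*τ)) * t) * ‖η 0 - d‖ := by rw [hcomb]
    · -- non-resonant case
      have h1lam : (1:ℝ) - lam ≠ 0 := sub_ne_zero.mpr (Ne.symm hcase)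
      set c : ℝ := min (lam/τ) (1/(2*τ)) with hcdef
      have hcpos : 0 < c := lt_min (div_pos hlam hτ) (by positivity)
      refine ⟨1 + 2 * G * N / |1 - lam|, c, hcpos, ?_⟩
      intro t ht
      have hform : ∀ i, η t i - d i =
          (γ i * S0 / (1 - lam)) * Real.exp ((-(lam/τ)) * t)
          + ((η 0 i - d i) - γ i * S0 / (1 - lam)) * Real.exp ((-(1/τ)) * t) := by
        intro i
        refine ode_unique (-(1/τ)) (fun s => (γ i * S0 / τ) * Real.exp ((-(lam/τ)) * s))
          (fun s => η s i - d i)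
          (fun s => (γ i * S0 / (1 - lam)) * Real.exp ((-(lam/τ)) * s)
            + ((η 0 i - d i) - γ i * S0 / (1 - lam)) * Real.exp ((-(1/τ)) * s)) ?_ ?_ ?_ t
        · simp
        · intro s
          convert hyd s i using 1
          rw [hSform s]
          ring
        · intro s
          have hexp1 : HasDerivAt (fun s : ℝ => Real.exp ((-(lam/τ)) * s))
              (Real.exp ((-(lam/τ)) * s) * ((-(lam/τ)) * 1)) s :=
            ((hasDerivAt_id s).const_mul (-(lam/τ))).exp
          have hexp2 : HasDerivAt (fun s : ℝ => Real.exp ((-(1/τ)) * s))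
              (Real.exp ((-(1/τ)) * s) * ((-(1/τ)) * 1)) s :=
            ((hasDerivAt_id s).const_mul (-(1/τ))).exp
          have := (hexp1.const_mul (γ i * S0 / (1 - lam))).add
            (hexp2.const_mul ((η 0 i - d i) - γ i * S0 / (1 - lam)))
          refine this.congr_deriv ?_
          field_simp
          ring
      -- bound
      have hE1 : Real.exp ((-(lam/τ)) * t) ≤ Real.exp (-c * t) := by
        apply Real.exp_le_exp.mpr
        have : c ≤ lam/τ := min_le_left _ _
        nlinarith
      have hE2 : Real.exp ((-(1/τ)) * t) ≤ Real.exp (-c * t) := by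
        apply Real.exp_le_exp.mpr
        have h2 : c ≤ 1/(2*τ) := min_le_right _ _
        have h3 : 1/(2*τ) ≤ 1/τ := by
          rw [div_le_div_iff₀ (by positivity) hτ]
          linarith
        nlinarith
      have hEpos : (0:ℝ) < Real.exp (-c * t) := Real.exp_pos _
      rw [pi_norm_le_iff_of_nonneg (by positivity)]
      intro i
      rw [Pi.sub_apply, Real.norm_eq_abs, hform i]
      have hCbound : |γ i * S0 / (1 - lam)| ≤ G * N * ‖η 0 - d‖ / |1 - lam| := by
        rw [abs_div, abs_mul]
        apply (div_le_div_iff_of_pos_right (abs_pos.mpr h1lam)).mpr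
        calc |γ i| * |S0| ≤ G * (N * ‖η 0 - d‖) :=
              mul_le_mul (hGi i) hS0bound (abs_nonneg _) hG0
          _ = G * N * ‖η 0 - d‖ := by ring
      have hDbound : |(η 0 i - d i) - γ i * S0 / (1 - lam)|
          ≤ ‖η 0 - d‖ + G * N * ‖η 0 - d‖ / |1 - lam| := by
        calc |(η 0 i - d i) - γ i * S0 / (1 - lam)|
            ≤ |η 0 i - d i| + |γ i * S0 / (1 - lam)| := abs_sub _ _
          _ ≤ ‖η 0 - d‖ + G * N * ‖η 0 - d‖ / |1 - lam| :=
              add_le_add (hy0i i) hCbound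
      have hEm1 : (0:ℝ) < Real.exp ((-(lam/τ)) * t) := Real.exp_pos _
      have hEm2 : (0:ℝ) < Real.exp ((-(1/τ)) * t) := Real.exp_pos _
      calc |(γ i * S0 / (1 - lam)) * Real.exp ((-(lam/τ)) * t)
            + ((η 0 i - d i) - γ i * S0 / (1 - lam)) * Real.exp ((-(1/τ)) * t)|
          ≤ |γ i * S0 / (1 - lam)| * Real.exp ((-(lam/τ)) * t)
            + |(η 0 i - d i) - γ i * S0 / (1 - lam)| * Real.exp ((-(1/τ)) * t) := by
            calc _ ≤ |(γ i * S0 / (1 - lam)) * Real.exp ((-(lam/τ)) * t)|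
                  + |((η 0 i - d i) - γ i * S0 / (1 - lam)) * Real.exp ((-(1/τ)) * t)| :=
                abs_add_le _ _
              _ = _ := by rw [abs_mul, abs_mul, abs_of_pos hEm1, abs_of_pos hEm2]
        _ ≤ |γ i * S0 / (1 - lam)| * Real.exp (-c * t)
            + |(η 0 i - d i) - γ i * S0 / (1 - lam)| * Real.exp (-c * t) := by
            apply add_le_add
            · exact mul_le_mul_of_nonneg_left hE1 (abs_nonneg _)
            · exact mul_le_mul_of_nonneg_left hE2 (abs_nonneg _)
        _ ≤ (G * N * ‖η 0 - d‖ / |1 - lam|) * Real.exp (-c * t)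
            + (‖η 0 - d‖ + G * N * ‖η 0 - d‖ / |1 - lam|) * Real.exp (-c * t) := by
            apply add_le_add
            · exact mul_le_mul_of_nonneg_right hCbound hEpos.le
            · exact mul_le_mul_of_nonneg_right hDbound hEpos.le
        _ = (1 + 2 * G * N / |1 - lam|) * Real.exp (-c * t) * ‖η 0 - d‖ := by
            ring
end

section
/- For the LTI reduced AGC system η̇ = -(1/τ) B_ACE (η - ΔP^L) with B_ACE = I_N - γ1ᵀ, γ = (β - b)/β̄, the transfer function from the disturbance ΔP^L_j to the control signal η_i is T_{ij}(s) = (1/(τs+1)) [ δ_{ij} - (1/β̄)(β_i - b_i) τs/(τs + (Σ_k b_k)/β̄) ]. Formally: for every complex s with τs + 1 ≠ 0 and τs + (Σ_k b_k)/β̄ ≠ 0, e_iᵀ (τ s I_N + B_ACE)⁻¹ B_ACE e_j equals the stated expression. -/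
open Matrix

lemma stmt_14_sum_helper {N : ℕ} (i j : Fin N) (u t w : ℂ) (g : Fin N → ℂ) :
    ∑ k, (u * ((if i = k then (1:ℂ) else 0) + t)) * (w * (if k = j then 1 else 0) - g k)
      = u * ((w * (if i = j then 1 else 0) - g i) + t * (w - ∑ k, g k)) := by
  have h : ∀ k ∈ Finset.univ, (u * ((if i = k then (1:ℂ) else 0) + t)) *
        (w * (if k = j then 1 else 0) - g k)
      = (if i = k then u * (w * (if k = j then 1 else 0) - g k) else 0)
        + (u * t * w) * (if k = j then 1 else 0) - (u * t) * g k := by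
    intro k _
    by_cases h : i = k
    · subst h
      by_cases hk : i = j <;> simp [hk] <;> ring
    · by_cases hk : k = j
      · subst hk
        simp [h]
        try ring
      · simp [h, hk]
        try ring
  rw [Finset.sum_congr rfl h, Finset.sum_sub_distrib, Finset.sum_add_distrib,
    Finset.sum_ite_eq, ← Finset.mul_sum, ← Finset.mul_sum]
  simp
  ring

theorem stmt_14 (N : ℕ) (hN : 1 ≤ N) (b β : Fin N → ℝ)
    (hb : ∀ i, 0 < b i) (hβ : ∀ i, 0 < β i)
    (βbar : ℝ) (hβbar : βbar = ∑ k, β k)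
    (γ : Fin N → ℝ) (hγ : γ = fun i => (β i - b i) / βbar)
    (Bc : Matrix (Fin N) (Fin N) ℂ)
    (hBc : ∀ i j, Bc i j = (if i = j then (1:ℂ) else 0) - (γ i : ℂ))
    (τ : ℝ) (hτ : 0 < τ) (s : ℂ)
    (hs1 : (τ : ℂ) * s + 1 ≠ 0)
    (hs2 : (τ : ℂ) * s + ((∑ k, b k) / βbar : ℝ) ≠ 0)
    (i j : Fin N) :
    ((((τ : ℂ) * s) • (1 : Matrix (Fin N) (Fin N) ℂ) + Bc)⁻¹ * Bc) i j =
      (1 / ((τ : ℂ) * s + 1)) *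
        ((if i = j then (1:ℂ) else 0) -
          ((1 / βbar : ℝ) : ℂ) * ((β i - b i : ℝ) : ℂ) * ((τ : ℂ) * s) /
            ((τ : ℂ) * s + (((∑ k, b k) / βbar : ℝ) : ℂ))) := by
  haveI : NeZero N := ⟨by omega⟩
  have hβbar_pos : 0 < βbar := by
    rw [hβbar]
    exact Finset.sum_pos (fun i _ => hβ i) Finset.univ_nonempty
  have hβbar_ne : (βbar : ℂ) ≠ 0 := Complex.ofReal_ne_zero.mpr hβbar_pos.ne'
  set a : ℂ := (τ : ℂ) * s with ha
  set c : ℂ := (((∑ k, b k) / βbar : ℝ) : ℂ) with hc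
  set g : Fin N → ℂ := fun i => ((γ i : ℝ) : ℂ) with hg
  have hGr : ∑ k, γ k = 1 - (∑ k, b k) / βbar := by
    rw [hγ]
    simp only
    rw [← Finset.sum_div, Finset.sum_sub_distrib, ← hβbar]
    field_simp
  have hG : ∑ k, g k = 1 - c := by
    rw [hg, hc]
    push_cast
    exact_mod_cast hGr
  set M : Matrix (Fin N) (Fin N) ℂ := a • (1 : Matrix (Fin N) (Fin N) ℂ) + Bc with hM
  have hMe : ∀ k l, M k l = (a + 1) * (if k = l then 1 else 0) - g k := by
    intro k l
    rw [hM]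
    simp only [Matrix.add_apply, Matrix.smul_apply, Matrix.one_apply, hBc k l, hg, smul_eq_mul]
    by_cases h : k = l <;> simp [h] <;> ring
  set Minv : Matrix (Fin N) (Fin N) ℂ :=
    Matrix.of (fun p q => (1/(a+1)) * ((if p = q then 1 else 0) + g p / (a + c))) with hMinv
  have hleft : Minv * M = 1 := by
    ext p q
    rw [Matrix.mul_apply]
    have hterm : ∀ k ∈ Finset.univ, Minv p k * M k q
        = ((1/(a+1)) * ((if p = k then (1:ℂ) else 0) + g p / (a + c))) *
          ((a + 1) * (if k = q then 1 else 0) - g k) := by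
      intro k _
      rw [hMe k q, hMinv]
      rfl
    rw [Finset.sum_congr rfl hterm, stmt_14_sum_helper, hG, Matrix.one_apply]
    by_cases h : p = q <;> simp only [h, if_true, if_false] <;> field_simp <;> ring
  have hinv : M⁻¹ = Minv := Matrix.inv_eq_left_inv hleft
  rw [hinv, Matrix.mul_apply]
  have hterm : ∀ k ∈ Finset.univ, Minv i k * Bc k j
      = ((1/(a+1)) * ((if i = k then (1:ℂ) else 0) + g i / (a + c))) *
        (1 * (if k = j then 1 else 0) - g k) := by
    intro k _
    rw [hBc k j, hMinv]
    simp only [Matrix.of_apply, hg]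
    ring
  rw [Finset.sum_congr rfl hterm, stmt_14_sum_helper, hG]
  have hgi : g i = ((β i - b i : ℝ) : ℂ) / (βbar : ℂ) := by
    rw [hg, hγ]
    push_cast
    ring
  rw [hgi]
  by_cases h : i = j <;> simp only [h, if_true, if_false] <;> push_cast <;> field_simp <;> ring
end
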